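/- Let N ≥ 1 and let P_{XYZ|ABC} be a family of probability distributions on triples (x,y,z), with x,y ∈ {+1,−1}, z in a finite set, indexed by settings a ∈ {0,2,…,2N−2}, b ∈ {1,3,…,2N−1}, and c in a finite set, satisfying the non-signalling conditions: the marginal of (X,Y) given (a,b,c) does not depend on c, the marginal of (X,Z) given (a,b,c) does not depend on b, and the marginal of (Y,Z) given (a,b,c) does not depend on a. Then for all settings a, b, c, the variational distance between the joint distribution P_{XZ|a,b,c} and the product of the uniform distribution on {+1,−1} with the marginal P_{Z|a,b,c} satisfies 2·D(P_{XZ|a,b,c}, uniform × P_{Z|a,b,c}) ≤ I_N, where I_N is the chained-Bell quantity of the two-party marginal P_{XY|AB}. -/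

import Mathlib

noncomputable section

open Finset

/-- The two outcomes `+1` and `-1`. -/
def pm : Finset ℤ := {1, -1}

/-- Settings on side A: `{0, 2, 4, …, 2N-2}`. -/
def SA (N : ℕ) : Finset ℕ := (Finset.range N).image (fun k => 2 * k)

/-- Settings on side B: `{1, 3, 5, …, 2N-1}`. -/
def SB (N : ℕ) : Finset ℕ := (Finset.range N).image (fun k => 2 * k + 1)

section
variable {C Z : Type} [Fintype Z]

/-- Marginal distribution of `(X, Y)` given settings `(a, b, c)`. -/
def PXY (P : ℕ → ℕ → C → ℤ → ℤ → Z → ℝ) (a b : ℕ) (c : C) (x y : ℤ) : ℝ :=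
  ∑ z, P a b c x y z

/-- Marginal distribution of `(X, Z)` given settings `(a, b, c)`. -/
def PXZ (P : ℕ → ℕ → C → ℤ → ℤ → Z → ℝ) (a b : ℕ) (c : C) (x : ℤ) (z : Z) : ℝ :=
  ∑ y ∈ pm, P a b c x y z

/-- Marginal distribution of `Z` given settings `(a, b, c)`. -/
def PZ (P : ℕ → ℕ → C → ℤ → ℤ → Z → ℝ) (a b : ℕ) (c : C) (z : Z) : ℝ :=
  ∑ x ∈ pm, ∑ y ∈ pm, P a b c x y z

/-- Probability that `X = Y` given settings `(a, b, c)`. -/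
def Pagree (P : ℕ → ℕ → C → ℤ → ℤ → Z → ℝ) (a b : ℕ) (c : C) : ℝ :=
  PXY P a b c 1 1 + PXY P a b c (-1) (-1)

/-- Probability that `X ≠ Y` given settings `(a, b, c)`. -/
def Pdiff (P : ℕ → ℕ → C → ℤ → ℤ → Z → ℝ) (a b : ℕ) (c : C) : ℝ :=
  PXY P a b c 1 (-1) + PXY P a b c (-1) 1

/-- Chained-Bell quantity `I_N` of the two-party marginal, computed at setting `c`:
`I_N = P(X=Y | A=0, B=2N-1) + ∑_{a,b : |a-b|=1} P(X≠Y | A=a, B=b)`. -/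
def IN (P : ℕ → ℕ → C → ℤ → ℤ → Z → ℝ) (N : ℕ) (c : C) : ℝ :=
  Pagree P 0 (2 * N - 1) c +
    ∑ p ∈ (SA N ×ˢ SB N).filter (fun p => p.1 + 1 = p.2 ∨ p.2 + 1 = p.1),
      Pdiff P p.1 p.2 c

/-- Variational distance between the joint distribution `P_{XZ|a,b,c}` on `{+1,-1} × Z`
and the product of the uniform distribution on `{+1,-1}` with `P_{Z|a,b,c}`
(the latter assigns `(x, z)` the value `(1/2) · P_Z(z)`). -/
def DXZ (P : ℕ → ℕ → C → ℤ → ℤ → Z → ℝ) (a b : ℕ) (c : C) : ℝ :=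
  (1 / 2) * ∑ x ∈ pm, ∑ z, |PXZ P a b c x z - (1 / 2) * PZ P a b c z|

end

/-!
Write `biasX a b z = P(X = 1, z) - P(X = -1, z)` and `biasY a b z = P(Y = 1, z) - P(Y = -1, z)`.
Then `2 D(P_{XZ|a,b,c}, uniform × P_{Z|a,b,c}) = ∑_z |biasX a b z|`. By non-signalling `biasX` does
not depend on `b` and `biasY` not on `a`, and for every pair of settings
`|biasX - biasY| ≤ 2 P(X ≠ Y, z)` and `|biasX + biasY| ≤ 2 P(X = Y, z)`. Walking along the chain
of settings `0, 1, 2, …, 2N-1` and back to `0` through the closing pair `(0, 2N-1)` turns the bias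
`biasX a` into `-biasX a`, so `2 |biasX a z|` is at most twice the pointwise chained-Bell sum;
summing over `z` gives the bound, and `I_N` does not depend on `c` by non-signalling.
-/

theorem two_mul_norm_le_sum_norm_sub_add_norm {E : Type*} [SeminormedAddCommGroup E]
    [NormedSpace ℝ E] (u : ℕ → E) {a n : ℕ} (ha : a ≤ n) :
    2 * ‖u a‖ ≤ ∑ i ∈ range n, ‖u (i + 1) - u i‖ + ‖u n + u 0‖ := by
  have hchain : ∀ {m k : ℕ}, m ≤ k → ‖u k - u m‖ ≤ ∑ i ∈ Ico m k, ‖u (i + 1) - u i‖ := by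
    intro m k hmk
    simpa only [dist_eq_norm, norm_sub_rev] using dist_le_Ico_sum_dist u hmk
  have hsplit : ∑ i ∈ Ico 0 a, ‖u (i + 1) - u i‖ + ∑ i ∈ Ico a n, ‖u (i + 1) - u i‖ =
      ∑ i ∈ range n, ‖u (i + 1) - u i‖ := by
    rw [sum_Ico_consecutive _ (Nat.zero_le a) ha, range_eq_Ico]
  have htwo : (2 : ℝ) • u a = (u a - u 0) + (u n + u 0) - (u n - u a) := by
    rw [two_smul]; abel
  calc 2 * ‖u a‖ = ‖(u a - u 0) + (u n + u 0) - (u n - u a)‖ := by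
        rw [← htwo, norm_smul, Real.norm_two]
    _ ≤ ‖u a - u 0‖ + ‖u n + u 0‖ + ‖u n - u a‖ := norm_sub_le_of_le (norm_add_le _ _) le_rfl
    _ ≤ _ := by linarith [hchain (Nat.zero_le a), hchain ha]

theorem sum_pm {M : Type*} [AddCommMonoid M] (f : ℤ → M) : ∑ x ∈ pm, f x = f 1 + f (-1) := by
  simp [pm]

theorem one_mem_pm : (1 : ℤ) ∈ pm := by simp [pm]

theorem neg_one_mem_pm : (-1 : ℤ) ∈ pm := by simp [pm]

theorem mem_SA {N a : ℕ} : a ∈ SA N ↔ a % 2 = 0 ∧ a < 2 * N := by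
  simp only [SA, mem_image, mem_range]
  constructor
  · rintro ⟨k, hk, rfl⟩; omega
  · intro h; exact ⟨a / 2, by omega, by omega⟩

theorem mem_SB {N b : ℕ} : b ∈ SB N ↔ b % 2 = 1 ∧ b < 2 * N := by
  simp only [SB, mem_image, mem_range]
  constructor
  · rintro ⟨k, hk, rfl⟩; omega
  · intro h; exact ⟨b / 2, by omega, by omega⟩

/-- The chain `0 – 1 – 2 – ⋯ – (2N-1)` of settings: edge `i` joins `i` and `i + 1`,
written as an (A-setting, B-setting) pair. -/
def chainEdge (i : ℕ) : ℕ × ℕ := if Even i then (i, i + 1) else (i + 1, i)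

theorem chainEdge_two_mul (k : ℕ) : chainEdge (2 * k) = (2 * k, 2 * k + 1) := by
  simp [chainEdge]

theorem chainEdge_two_mul_add_one (k : ℕ) : chainEdge (2 * k + 1) = (2 * k + 2, 2 * k + 1) := by
  simp [chainEdge]

theorem chainEdge_injective : Function.Injective chainEdge := by
  intro i j h
  simp only [chainEdge, Nat.even_iff] at h
  split_ifs at h <;> simp only [Prod.mk.injEq] at h <;> omega

theorem filter_adjacent_eq_image_chainEdge (N : ℕ) :
    (SA N ×ˢ SB N).filter (fun p => p.1 + 1 = p.2 ∨ p.2 + 1 = p.1) =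
      (range (2 * N - 1)).image chainEdge := by
  ext ⟨a, b⟩
  simp only [mem_filter, mem_product, mem_SA, mem_SB, mem_image, mem_range, chainEdge,
    Nat.even_iff]
  constructor
  · rintro ⟨⟨⟨ha, ha'⟩, hb, hb'⟩, h | h⟩
    · exact ⟨a, by omega, by simp [ha, h]⟩
    · exact ⟨b, by omega, by simp [hb, ← h]⟩
  · rintro ⟨i, hi, h⟩
    split_ifs at h <;> simp only [Prod.mk.injEq] at h <;> omega

section Conditions

variable {C Z : Type} [Fintype Z] (P : ℕ → ℕ → C → ℤ → ℤ → Z → ℝ) (N : ℕ)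

def NonnegOnSettings : Prop :=
  ∀ a ∈ SA N, ∀ b ∈ SB N, ∀ (c : C), ∀ x ∈ pm, ∀ y ∈ pm, ∀ z : Z, 0 ≤ P a b c x y z

def XYMarginalIndepC : Prop :=
  ∀ a ∈ SA N, ∀ b ∈ SB N, ∀ (c c' : C), ∀ x ∈ pm, ∀ y ∈ pm, PXY P a b c x y = PXY P a b c' x y

def XZMarginalIndepB : Prop :=
  ∀ a ∈ SA N, ∀ b ∈ SB N, ∀ b' ∈ SB N, ∀ (c : C), ∀ x ∈ pm, ∀ z : Z,
    PXZ P a b c x z = PXZ P a b' c x z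

def YZMarginalIndepA : Prop :=
  ∀ a ∈ SA N, ∀ a' ∈ SA N, ∀ b ∈ SB N, ∀ (c : C), ∀ y ∈ pm, ∀ z : Z,
    ∑ x ∈ pm, P a b c x y z = ∑ x ∈ pm, P a' b c x y z

end Conditions

section Chain

variable {C Z : Type} [Fintype Z] (P : ℕ → ℕ → C → ℤ → ℤ → Z → ℝ)

def disagreeAt (a b : ℕ) (c : C) (z : Z) : ℝ := P a b c 1 (-1) z + P a b c (-1) 1 z

def agreeAt (a b : ℕ) (c : C) (z : Z) : ℝ := P a b c 1 1 z + P a b c (-1) (-1) z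

theorem Pdiff_eq_sum_disagreeAt (a b : ℕ) (c : C) :
    Pdiff P a b c = ∑ z, disagreeAt P a b c z := by
  simp only [Pdiff, PXY, disagreeAt, sum_add_distrib]

theorem Pagree_eq_sum_agreeAt (a b : ℕ) (c : C) :
    Pagree P a b c = ∑ z, agreeAt P a b c z := by
  simp only [Pagree, PXY, agreeAt, sum_add_distrib]

theorem IN_eq_sum_chainEdge (N : ℕ) (c : C) :
    IN P N c = Pagree P 0 (2 * N - 1) c +
      ∑ i ∈ range (2 * N - 1), Pdiff P (chainEdge i).1 (chainEdge i).2 c := by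
  rw [IN, filter_adjacent_eq_image_chainEdge, sum_image chainEdge_injective.injOn]

theorem IN_eq_of_PXY_eq {N : ℕ} (hN : 1 ≤ N) (hNS1 : XYMarginalIndepC P N) (c c' : C) :
    IN P N c = IN P N c' := by
  have h0 : 0 ∈ SA N := mem_SA.2 (by omega)
  have hlast : 2 * N - 1 ∈ SB N := mem_SB.2 (by omega)
  unfold IN Pagree Pdiff
  rw [hNS1 0 h0 _ hlast c c' 1 one_mem_pm 1 one_mem_pm,
    hNS1 0 h0 _ hlast c c' (-1) neg_one_mem_pm (-1) neg_one_mem_pm]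
  congr 1
  refine sum_congr rfl fun p hp => ?_
  obtain ⟨ha, hb⟩ := mem_product.1 (mem_filter.1 hp).1
  rw [hNS1 _ ha _ hb c c' 1 one_mem_pm (-1) neg_one_mem_pm,
    hNS1 _ ha _ hb c c' (-1) neg_one_mem_pm 1 one_mem_pm]

end Chain

section Bias

variable {C Z : Type} (P : ℕ → ℕ → C → ℤ → ℤ → Z → ℝ)

def biasX (a b : ℕ) (c : C) (z : Z) : ℝ := PXZ P a b c 1 z - PXZ P a b c (-1) z

def biasY (a b : ℕ) (c : C) (z : Z) : ℝ := ∑ x ∈ pm, P a b c x 1 z - ∑ x ∈ pm, P a b c x (-1) z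

theorem two_mul_DXZ_eq_sum_abs_biasX [Fintype Z] (a b : ℕ) (c : C) :
    2 * DXZ P a b c = ∑ z, |biasX P a b c z| := by
  have hterm : ∀ z, ∑ x ∈ pm, |PXZ P a b c x z - 1 / 2 * PZ P a b c z| = |biasX P a b c z| := by
    intro z
    have hPZ : PZ P a b c z = PXZ P a b c 1 z + PXZ P a b c (-1) z := sum_pm _
    have hplus : PXZ P a b c 1 z - 1 / 2 * PZ P a b c z = biasX P a b c z / 2 := by
      rw [hPZ, biasX]; ring
    have hminus : PXZ P a b c (-1) z - 1 / 2 * PZ P a b c z = -(biasX P a b c z / 2) := by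
      rw [hPZ, biasX]; ring
    rw [sum_pm, hplus, hminus, abs_neg, abs_div, abs_two]
    ring
  rw [DXZ, sum_comm, sum_congr rfl fun z _ => hterm z]
  ring

variable {a b : ℕ} {c : C} {z : Z}

theorem biasX_sub_biasY (a b : ℕ) (c : C) (z : Z) :
    biasX P a b c z - biasY P a b c z = 2 * (P a b c 1 (-1) z - P a b c (-1) 1 z) := by
  simp only [biasX, biasY, PXZ, sum_pm]; ring

theorem biasX_add_biasY (a b : ℕ) (c : C) (z : Z) :
    biasX P a b c z + biasY P a b c z = 2 * (P a b c 1 1 z - P a b c (-1) (-1) z) := by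
  simp only [biasX, biasY, PXZ, sum_pm]; ring

theorem abs_biasX_sub_biasY_le (h₁ : 0 ≤ P a b c 1 (-1) z) (h₂ : 0 ≤ P a b c (-1) 1 z) :
    |biasX P a b c z - biasY P a b c z| ≤ 2 * disagreeAt P a b c z := by
  rw [biasX_sub_biasY, abs_mul, abs_two, disagreeAt]
  gcongr
  exact (abs_sub _ _).trans_eq (by rw [abs_of_nonneg h₁, abs_of_nonneg h₂])

theorem abs_biasX_add_biasY_le (h₁ : 0 ≤ P a b c 1 1 z) (h₂ : 0 ≤ P a b c (-1) (-1) z) :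
    |biasX P a b c z + biasY P a b c z| ≤ 2 * agreeAt P a b c z := by
  rw [biasX_add_biasY, abs_mul, abs_two, agreeAt]
  gcongr
  exact (abs_sub _ _).trans_eq (by rw [abs_of_nonneg h₁, abs_of_nonneg h₂])

end Bias

section NonSignalling

variable {C Z : Type} (P : ℕ → ℕ → C → ℤ → ℤ → Z → ℝ) {N : ℕ}

theorem biasX_congr_right (hNS2 : XZMarginalIndepB P N) {a b b' : ℕ} (ha : a ∈ SA N)
    (hb : b ∈ SB N) (hb' : b' ∈ SB N) (c : C) (z : Z) :
    biasX P a b c z = biasX P a b' c z := by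
  simp only [biasX, hNS2 a ha b hb b' hb' c 1 one_mem_pm z,
    hNS2 a ha b hb b' hb' c (-1) neg_one_mem_pm z]

theorem biasY_congr_left (hNS3 : YZMarginalIndepA P N) {a a' b : ℕ} (ha : a ∈ SA N)
    (ha' : a' ∈ SA N) (hb : b ∈ SB N) (c : C) (z : Z) :
    biasY P a b c z = biasY P a' b c z := by
  simp only [biasY, hNS3 a ha a' ha' b hb c 1 one_mem_pm z,
    hNS3 a ha a' ha' b hb c (-1) neg_one_mem_pm z]

/-- The outcome biases met along the chain of settings: at the A-setting `2k` the bias of `X`,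
at the B-setting `2k+1` the bias of `Y`, each read off from the edge `(2k, 2k+1)`. -/
def chainBias (c : C) (i : ℕ) (z : Z) : ℝ :=
  if Even i then biasX P i (i + 1) c z else biasY P (i - 1) i c z

theorem chainBias_two_mul (c : C) (k : ℕ) (z : Z) :
    chainBias P c (2 * k) z = biasX P (2 * k) (2 * k + 1) c z := by
  simp [chainBias]

theorem chainBias_two_mul_add_one (c : C) (k : ℕ) (z : Z) :
    chainBias P c (2 * k + 1) z = biasY P (2 * k) (2 * k + 1) c z := by
  simp [chainBias]

theorem abs_chainBias_succ_sub_le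
    (hpos : NonnegOnSettings P N) (hNS2 : XZMarginalIndepB P N) (hNS3 : YZMarginalIndepA P N)
    {i : ℕ} (hi : i + 1 < 2 * N) (c : C) (z : Z) :
    |chainBias P c (i + 1) z - chainBias P c i z| ≤
      2 * disagreeAt P (chainEdge i).1 (chainEdge i).2 c z := by
  obtain ⟨k, rfl | rfl⟩ := Nat.even_or_odd' i
  · have ha : 2 * k ∈ SA N := mem_SA.2 (by omega)
    have hb : 2 * k + 1 ∈ SB N := mem_SB.2 (by omega)
    rw [chainBias_two_mul_add_one, chainBias_two_mul, chainEdge_two_mul, abs_sub_comm]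
    exact abs_biasX_sub_biasY_le P (hpos _ ha _ hb c 1 one_mem_pm (-1) neg_one_mem_pm z)
      (hpos _ ha _ hb c (-1) neg_one_mem_pm 1 one_mem_pm z)
  · have ha : 2 * k ∈ SA N := mem_SA.2 (by omega)
    have ha' : 2 * k + 2 ∈ SA N := mem_SA.2 (by omega)
    have hb : 2 * k + 1 ∈ SB N := mem_SB.2 (by omega)
    have hb' : 2 * k + 3 ∈ SB N := mem_SB.2 (by omega)
    rw [show 2 * k + 1 + 1 = 2 * (k + 1) by ring, chainBias_two_mul, chainBias_two_mul_add_one,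
      chainEdge_two_mul_add_one, show 2 * (k + 1) = 2 * k + 2 by ring,
      biasX_congr_right P hNS2 ha' hb' hb, biasY_congr_left P hNS3 ha ha' hb]
    exact abs_biasX_sub_biasY_le P (hpos _ ha' _ hb c 1 one_mem_pm (-1) neg_one_mem_pm z)
      (hpos _ ha' _ hb c (-1) neg_one_mem_pm 1 one_mem_pm z)

theorem abs_chainBias_last_add_first_le
    (hpos : NonnegOnSettings P N) (hNS2 : XZMarginalIndepB P N) (hNS3 : YZMarginalIndepA P N)
    (hN : 1 ≤ N) (c : C) (z : Z) :
    |chainBias P c (2 * N - 1) z + chainBias P c 0 z| ≤ 2 * agreeAt P 0 (2 * N - 1) c z := by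
  have h0 : 0 ∈ SA N := mem_SA.2 (by omega)
  have hlast : 2 * (N - 1) ∈ SA N := mem_SA.2 (by omega)
  have h1B : 1 ∈ SB N := mem_SB.2 (by omega)
  have hlastB : 2 * (N - 1) + 1 ∈ SB N := mem_SB.2 (by omega)
  have hfirst : chainBias P c 0 z = biasX P 0 1 c z := by simpa using chainBias_two_mul P c 0 z
  rw [show 2 * N - 1 = 2 * (N - 1) + 1 by omega, chainBias_two_mul_add_one,
    hfirst, biasY_congr_left P hNS3 hlast h0 hlastB,
    biasX_congr_right P hNS2 h0 h1B hlastB, add_comm]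
  exact abs_biasX_add_biasY_le P (hpos _ h0 _ hlastB c 1 one_mem_pm 1 one_mem_pm z)
    (hpos _ h0 _ hlastB c (-1) neg_one_mem_pm (-1) neg_one_mem_pm z)

end NonSignalling

section Main

variable {C Z : Type} (P : ℕ → ℕ → C → ℤ → ℤ → Z → ℝ) {N : ℕ}

theorem abs_biasX_le_agreeAt_add_sum_disagreeAt (hpos : NonnegOnSettings P N)
    (hNS2 : XZMarginalIndepB P N) (hNS3 : YZMarginalIndepA P N) {a b : ℕ} (ha : a ∈ SA N)
    (hb : b ∈ SB N) (c : C) (z : Z) :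
    |biasX P a b c z| ≤ agreeAt P 0 (2 * N - 1) c z +
      ∑ i ∈ range (2 * N - 1), disagreeAt P (chainEdge i).1 (chainEdge i).2 c z := by
  have ha_mem := mem_SA.1 ha
  obtain ⟨k, rfl⟩ : ∃ k, a = 2 * k := ⟨a / 2, by omega⟩
  have hb' : 2 * k + 1 ∈ SB N := mem_SB.2 (by omega)
  have hchain := two_mul_norm_le_sum_norm_sub_add_norm (fun i => chainBias P c i z)
    (show 2 * k ≤ 2 * N - 1 by omega)
  simp only [Real.norm_eq_abs] at hchain
  have hsteps : ∑ i ∈ range (2 * N - 1), |chainBias P c (i + 1) z - chainBias P c i z| ≤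
      2 * ∑ i ∈ range (2 * N - 1), disagreeAt P (chainEdge i).1 (chainEdge i).2 c z := by
    rw [mul_sum]
    exact sum_le_sum fun i hi =>
      abs_chainBias_succ_sub_le P hpos hNS2 hNS3 (by rw [mem_range] at hi; omega) c z
  have hclose := abs_chainBias_last_add_first_le P hpos hNS2 hNS3 (by omega) c z
  rw [biasX_congr_right P hNS2 ha hb hb', ← chainBias_two_mul]
  linarith

theorem two_mul_DXZ_le_IN [Fintype Z] (hpos : NonnegOnSettings P N)
    (hNS2 : XZMarginalIndepB P N) (hNS3 : YZMarginalIndepA P N) {a b : ℕ} (ha : a ∈ SA N)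
    (hb : b ∈ SB N) (c : C) :
    2 * DXZ P a b c ≤ IN P N c := by
  rw [two_mul_DXZ_eq_sum_abs_biasX, IN_eq_sum_chainEdge, Pagree_eq_sum_agreeAt]
  simp only [Pdiff_eq_sum_disagreeAt]
  rw [sum_comm, ← sum_add_distrib]
  exact sum_le_sum fun z _ => abs_biasX_le_agreeAt_add_sum_disagreeAt P hpos hNS2 hNS3 ha hb c z

end Main

theorem statement3_general {C Z : Type} [Fintype Z] (N : ℕ) (hN : 1 ≤ N)
    (P : ℕ → ℕ → C → ℤ → ℤ → Z → ℝ)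
    (hpos : ∀ a ∈ SA N, ∀ b ∈ SB N, ∀ (c : C), ∀ x ∈ pm, ∀ y ∈ pm, ∀ z : Z,
      0 ≤ P a b c x y z)
    (hNS1 : ∀ a ∈ SA N, ∀ b ∈ SB N, ∀ (c c' : C), ∀ x ∈ pm, ∀ y ∈ pm,
      PXY P a b c x y = PXY P a b c' x y)
    (hNS2 : ∀ a ∈ SA N, ∀ b ∈ SB N, ∀ b' ∈ SB N, ∀ (c : C), ∀ x ∈ pm, ∀ z : Z,
      PXZ P a b c x z = PXZ P a b' c x z)
    (hNS3 : ∀ a ∈ SA N, ∀ a' ∈ SA N, ∀ b ∈ SB N, ∀ (c : C), ∀ y ∈ pm, ∀ z : Z,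
      ∑ x ∈ pm, P a b c x y z = ∑ x ∈ pm, P a' b c x y z) :
    ∀ a ∈ SA N, ∀ b ∈ SB N, ∀ c : C, ∀ c₀ : C,
      2 * DXZ P a b c ≤ IN P N c₀ := by
  intro a ha b hb c c₀
  rw [IN_eq_of_PXY_eq P hN hNS1 c₀ c]
  exact two_mul_DXZ_le_IN P hpos hNS2 hNS3 ha hb c

/-- For any non-signalling family of distributions `P_{XYZ|ABC}`,
`2 · D(P_{XZ|a,b,c}, uniform × P_{Z|a,b,c}) ≤ I_N`. -/
theorem statement3 {C Z : Type} [Fintype Z] (N : ℕ) (hN : 1 ≤ N)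
    (P : ℕ → ℕ → C → ℤ → ℤ → Z → ℝ)
    (hpos : ∀ a ∈ SA N, ∀ b ∈ SB N, ∀ (c : C), ∀ x ∈ pm, ∀ y ∈ pm, ∀ z : Z,
      0 ≤ P a b c x y z)
    (hsum : ∀ a ∈ SA N, ∀ b ∈ SB N, ∀ c : C,
      ∑ x ∈ pm, ∑ y ∈ pm, ∑ z, P a b c x y z = 1)
    (hNS1 : ∀ a ∈ SA N, ∀ b ∈ SB N, ∀ (c c' : C), ∀ x ∈ pm, ∀ y ∈ pm,
      PXY P a b c x y = PXY P a b c' x y)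
    (hNS2 : ∀ a ∈ SA N, ∀ b ∈ SB N, ∀ b' ∈ SB N, ∀ (c : C), ∀ x ∈ pm, ∀ z : Z,
      PXZ P a b c x z = PXZ P a b' c x z)
    (hNS3 : ∀ a ∈ SA N, ∀ a' ∈ SA N, ∀ b ∈ SB N, ∀ (c : C), ∀ y ∈ pm, ∀ z : Z,
      ∑ x ∈ pm, P a b c x y z = ∑ x ∈ pm, P a' b c x y z) :
    ∀ a ∈ SA N, ∀ b ∈ SB N, ∀ c : C, ∀ c₀ : C,
      2 * DXZ P a b c ≤ IN P N c₀ :=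
  statement3_general N hN P hpos hNS1 hNS2 hNS3
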